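/- arXiv:1611.07236 — 2 statements merged into one kernel-verified Lean document; each statement's English description precedes it below -/
import Mathlib

section
/- Let k : ℝ^d × ℝ^d \ diag → [0,∞) satisfy x ↦ ∫ (1 ∧ |y−x|²) k_s(x,y) dy ∈ L¹_loc, and let E(f,f) = ∫∫ (f(y)−f(x))² k_s(x,y) dx dy. Then for every Lipschitz g with compact support, the mollifications g_n = χ_{1/n}*g satisfy E(g_n − g, g_n − g) → 0 as n → ∞. -/
open MeasureTheory Filter Topology
open scoped ENNReal NNReal Pointwise

noncomputable section
set_option maxHeartbeats 1000000

abbrev Eucl (d : ℕ) := EuclideanSpace ℝ (Fin d)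

/-- Hypotheses on the mollifier `χ`. -/
structure IsMollifier (d : ℕ) (χ : Eucl d → ℝ) : Prop where
  smooth : ContDiff ℝ (⊤ : ℕ∞) χ
  compSupp : HasCompactSupport χ
  nonneg : ∀ x, 0 ≤ χ x
  le_one : ∀ x, χ x ≤ 1
  supp : Function.support χ ⊆ Metric.closedBall 0 1
  integral_one : ∫ x, χ x = 1

theorem energy_aux {d : ℕ} (ks : Eucl d → Eucl d → ℝ) (hks0 : ∀ x y, 0 ≤ ks x y)
    (hksm : Measurable (Function.uncurry ks)) (hsym : ∀ x y, ks x y = ks y x)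
    (K : Set (Eucl d)) (hK : IsCompact K)
    (hloc : (∫⁻ x in K, ∫⁻ y, ENNReal.ofReal (min 1 (‖y - x‖ ^ 2) * ks x y)) < ∞)
    (h : ℕ → Eucl d → ℝ) (hcont : ∀ n, Continuous (h n))
    (C : ℝ) (hC : 0 ≤ C)
    (hkey : ∀ n x y, (h n y - h n x) ^ 2 ≤ C * min 1 (‖y - x‖ ^ 2))
    (hsupp : ∀ n x, x ∉ K → h n x = 0)
    (htend : ∀ x, Tendsto (fun n => h n x) atTop (𝓝 0)) :
    Tendsto (fun n => ∫⁻ x, ∫⁻ y, ENNReal.ofReal ((h n y - h n x) ^ 2 * ks x y))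
      atTop (nhds 0) := by
  have hKm : MeasurableSet K := hK.isClosed.measurableSet
  set f : ℕ → Eucl d → Eucl d → ℝ≥0∞ :=
    fun n x y => ENNReal.ofReal ((h n y - h n x) ^ 2 * ks x y) with hf
  have hfm : ∀ n, Measurable (Function.uncurry (f n)) := by
    intro n
    apply ENNReal.measurable_ofReal.comp
    exact ((((hcont n).measurable.comp measurable_snd).sub
      ((hcont n).measurable.comp measurable_fst)).pow_const 2).mul hksm
  have hfsym : ∀ n x y, f n x y = f n y x := by
    intro n x y
    simp only [hf, hsym x y]
    ring_nf
  -- the dominating kernel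
  set w : Eucl d → Eucl d → ℝ≥0∞ :=
    fun x y => ENNReal.ofReal (min 1 (‖y - x‖ ^ 2) * ks x y) with hw
  have hwm : Measurable (Function.uncurry w) := by
    apply ENNReal.measurable_ofReal.comp
    exact (((continuous_const.min ((continuous_snd.sub continuous_fst).norm.pow 2))).measurable).mul hksm
  have hfw : ∀ n x y, f n x y ≤ ENNReal.ofReal C * w x y := by
    intro n x y
    rw [hf, hw, ← ENNReal.ofReal_mul hC]
    apply ENNReal.ofReal_le_ofReal
    rw [← mul_assoc]
    exact mul_le_mul_of_nonneg_right (hkey n x y) (hks0 x y)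
  -- S n : energy restricted to K
  set S : ℕ → ℝ≥0∞ := fun n => ∫⁻ x in K, ∫⁻ y, f n x y with hS
  -- the full double integral is at most 2 * S n
  have hle : ∀ n, (∫⁻ x, ∫⁻ y, f n x y) ≤ 2 * S n := by
    intro n
    rw [← lintegral_add_compl (fun x => ∫⁻ y, f n x y) hKm, two_mul]
    refine add_le_add le_rfl ?_
    calc ∫⁻ x in Kᶜ, ∫⁻ y, f n x y
        = ∫⁻ x in Kᶜ, ∫⁻ y in K, f n x y := by
          refine setLIntegral_congr_fun hKm.compl (fun x hx => ?_)
          rw [← lintegral_indicator hKm]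
          congr 1; funext y
          by_cases hy : y ∈ K
          · rw [Set.indicator_of_mem hy]
          · rw [Set.indicator_of_notMem hy, hf]
            simp [hsupp n x hx, hsupp n y hy]
      _ = ∫⁻ y in K, ∫⁻ x in Kᶜ, f n x y :=
          lintegral_lintegral_swap ((hfm n).aemeasurable)
      _ ≤ ∫⁻ y in K, ∫⁻ x, f n x y :=
          lintegral_mono fun y => setLIntegral_le_lintegral _ _
      _ = ∫⁻ x in K, ∫⁻ y, f n x y := by
          simp only [fun x y => (hfsym n x y).symm]
  -- S n tends to zero by dominated convergence
  have hStend : Tendsto S atTop (𝓝 0) := by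
    have h0 : (0 : ℝ≥0∞) = ∫⁻ x in K, (fun _ => (0 : ℝ≥0∞)) x := by simp
    rw [hS, h0]
    apply tendsto_lintegral_of_dominated_convergence
      (bound := fun x => ENNReal.ofReal C * ∫⁻ y, w x y)
    · exact fun n => (hfm n).lintegral_prod_right
    · intro n
      refine ae_of_all _ fun x => ?_
      calc ∫⁻ y, f n x y ≤ ∫⁻ y, ENNReal.ofReal C * w x y := lintegral_mono (hfw n x)
        _ = ENNReal.ofReal C * ∫⁻ y, w x y :=
            lintegral_const_mul' _ _ ENNReal.ofReal_ne_top
    · rw [lintegral_const_mul' _ _ ENNReal.ofReal_ne_top]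
      exact ENNReal.mul_ne_top ENNReal.ofReal_ne_top hloc.ne
    · have hae : ∀ᵐ x ∂(volume.restrict K), (∫⁻ y, w x y) < ∞ := by
        exact ae_lt_top (Measurable.lintegral_prod_right (ν := volume) hwm) hloc.ne
      filter_upwards [hae] with x hx
      have h0' : (0 : ℝ≥0∞) = ∫⁻ (y : Eucl d), (fun _ => (0 : ℝ≥0∞)) y := by simp
      rw [h0']
      apply tendsto_lintegral_of_dominated_convergence
        (bound := fun y => ENNReal.ofReal C * w x y)
      · intro n
        exact ENNReal.measurable_ofReal.comp
          ((((hcont n).measurable.sub measurable_const).pow_const 2).mul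
            (hksm.comp measurable_prodMk_left))
      · exact fun n => ae_of_all _ fun y => hfw n x y
      · rw [lintegral_const_mul' _ _ ENNReal.ofReal_ne_top]
        exact ENNReal.mul_ne_top ENNReal.ofReal_ne_top hx.ne
      · refine ae_of_all _ fun y => ?_
        have : Tendsto (fun n => (h n y - h n x) ^ 2 * ks x y) atTop (𝓝 0) := by
          have := (((htend y).sub (htend x)).pow 2).mul_const (ks x y)
          simpa using this
        have := ENNReal.tendsto_ofReal this
        simpa using this
  -- squeeze
  have h2S : Tendsto (fun n => 2 * S n) atTop (𝓝 0) := by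
    have := ENNReal.Tendsto.const_mul (a := 2) hStend (Or.inr (by norm_num))
    simpa using this
  exact tendsto_of_tendsto_of_tendsto_of_le_of_le tendsto_const_nhds h2S
    (fun n => zero_le) hle

theorem moll_props {d : ℕ} (χ : Eucl d → ℝ) (hχ : IsMollifier d χ)
    (g : Eucl d → ℝ) (L : ℝ≥0) (hg : LipschitzWith L g)
    (gn : ℕ → Eucl d → ℝ)
    (hgn : ∀ n x, gn n x =
      ∫ y in Metric.closedBall (0 : Eucl d) 1, χ y * g (x - (n : ℝ)⁻¹ • y)) :
    (∀ n x, |gn n x - g x| ≤ L * (n : ℝ)⁻¹) ∧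
    (∀ n x x', |gn n x - gn n x'| ≤ L * ‖x - x'‖) := by
  set B := Metric.closedBall (0 : Eucl d) 1 with hB
  have hχc : Continuous χ := hχ.smooth.continuous
  have hχB : ∫ y in B, χ y = 1 := by
    rw [setIntegral_eq_integral_of_forall_compl_eq_zero (fun y hy => ?_), hχ.integral_one]
    exact Function.notMem_support.mp (fun hs => hy (hχ.supp hs))
  have hint : ∀ (t : ℝ) (x : Eucl d), IntegrableOn (fun y => χ y * g (x - t • y)) B := by
    intro t x
    exact ((hχc.mul (hg.continuous.comp
      (continuous_const.sub (continuous_id.const_smul t)))).continuousOn).integrableOn_compact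
      (isCompact_closedBall _ _)
  have hintc : ∀ c : ℝ, IntegrableOn (fun y => χ y * c) B := fun c =>
    ((hχc.mul continuous_const).continuousOn).integrableOn_compact (isCompact_closedBall _ _)
  have hintC : ∀ F : Eucl d → ℝ, Continuous F → IntegrableOn F B := fun F hF =>
    hF.continuousOn.integrableOn_compact (isCompact_closedBall _ _)
  have hcomp : ∀ (t : ℝ) (x : Eucl d), Continuous fun y : Eucl d => g (x - t • y) :=
    fun t x => hg.continuous.comp (continuous_const.sub (continuous_id.const_smul t))
  constructor
  · intro n x
    have hdiff : gn n x - g x = ∫ y in B, χ y * (g (x - (n : ℝ)⁻¹ • y) - g x) := by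
      have : ∫ y in B, χ y * (g (x - (n : ℝ)⁻¹ • y) - g x)
          = (∫ y in B, χ y * g (x - (n : ℝ)⁻¹ • y)) - ∫ y in B, χ y * g x := by
        rw [← integral_sub (hint _ x) (hintc (g x))]
        congr 1; funext y; ring
      rw [this, hgn n x]
      congr 1
      rw [integral_mul_const, hχB, one_mul]
    rw [hdiff, ← Real.norm_eq_abs]
    have hb : ∀ y ∈ B, ‖χ y * (g (x - (n : ℝ)⁻¹ • y) - g x)‖ ≤ χ y * ((L : ℝ) * (n : ℝ)⁻¹) := by
      intro y hy
      rw [norm_mul, Real.norm_eq_abs (χ y), abs_of_nonneg (hχ.nonneg y)]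
      apply mul_le_mul_of_nonneg_left _ (hχ.nonneg y)
      have hy1 : ‖y‖ ≤ 1 := mem_closedBall_zero_iff.mp hy
      have hninv : (0:ℝ) ≤ ((n : ℝ))⁻¹ := by positivity
      have h1 : ‖g (x - (n : ℝ)⁻¹ • y) - g x‖ ≤ (L:ℝ) * ((n : ℝ)⁻¹ * ‖y‖) := by
        have h2 := hg.dist_le_mul (x - (n : ℝ)⁻¹ • y) x
        rw [dist_eq_norm, dist_eq_norm, sub_sub_cancel_left, norm_neg, norm_smul] at h2
        simpa [Real.norm_eq_abs, abs_of_nonneg hninv] using h2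
      refine h1.trans ?_
      have h3 : (n : ℝ)⁻¹ * ‖y‖ ≤ (n : ℝ)⁻¹ := by
        nlinarith [norm_nonneg y]
      exact mul_le_mul_of_nonneg_left h3 L.coe_nonneg
    calc ‖∫ y in B, χ y * (g (x - (n : ℝ)⁻¹ • y) - g x)‖
        ≤ ∫ y in B, χ y * ((L : ℝ) * (n : ℝ)⁻¹) := by
          refine (norm_integral_le_integral_norm _).trans ?_
          refine setIntegral_mono_on
            (hintC _ ((hχc.mul ((hcomp _ x).sub continuous_const)).norm)) (hintc _)
            measurableSet_closedBall ?_
          intro y hy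
          have := hb y hy
          simpa using this
      _ = (L : ℝ) * (n : ℝ)⁻¹ := by rw [integral_mul_const, hχB, one_mul]
  · intro n x x'
    have : gn n x - gn n x' = ∫ y in B, χ y * (g (x - (n : ℝ)⁻¹ • y) - g (x' - (n : ℝ)⁻¹ • y)) := by
      rw [hgn n x, hgn n x', ← integral_sub (hint _ x) (hint _ x')]
      congr 1; funext y; ring
    rw [this, ← Real.norm_eq_abs]
    calc ‖∫ y in B, χ y * (g (x - (n : ℝ)⁻¹ • y) - g (x' - (n : ℝ)⁻¹ • y))‖
        ≤ ∫ y in B, χ y * ((L : ℝ) * ‖x - x'‖) := by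
          refine (norm_integral_le_integral_norm _).trans ?_
          refine setIntegral_mono_on
            (hintC _ ((hχc.mul ((hcomp _ x).sub (hcomp _ x'))).norm)) (hintc _)
            measurableSet_closedBall ?_
          intro y hy
          rw [norm_mul, Real.norm_eq_abs (χ y), abs_of_nonneg (hχ.nonneg y)]
          apply mul_le_mul_of_nonneg_left _ (hχ.nonneg y)
          have h1 := hg.dist_le_mul (x - (n : ℝ)⁻¹ • y) (x' - (n : ℝ)⁻¹ • y)
          rw [dist_eq_norm, dist_eq_norm] at h1
          simpa [sub_sub_sub_cancel_right] using h1
      _ = (L : ℝ) * ‖x - x'‖ := by rw [integral_mul_const, hχB, one_mul]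

theorem natinv_le_one (n : ℕ) : ((n : ℝ))⁻¹ ≤ 1 := by
  rcases Nat.eq_zero_or_pos n with h | h
  · simp [h]
  · rw [inv_le_one₀ (by exact_mod_cast h)]
    exact_mod_cast h

theorem moll_supp {d : ℕ} (χ : Eucl d → ℝ) (hχ : IsMollifier d χ)
    (g : Eucl d → ℝ) (hgc : HasCompactSupport g)
    (gn : ℕ → Eucl d → ℝ)
    (hgn : ∀ n x, gn n x =
      ∫ y in Metric.closedBall (0 : Eucl d) 1, χ y * g (x - (n : ℝ)⁻¹ • y)) :
    ∀ n x, x ∉ tsupport g + Metric.closedBall (0 : Eucl d) 1 → gn n x - g x = 0 := by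
  intro n x hx
  have hgx : g x = 0 := by
    by_contra hne
    refine hx ?_
    have := Set.add_mem_add (subset_tsupport g hne)
      (Metric.mem_closedBall_self (x := (0 : Eucl d)) zero_le_one)
    simpa using this
  have hgnx : gn n x = 0 := by
    rw [hgn n x]
    rw [setIntegral_congr_fun measurableSet_closedBall (g := fun _ => (0 : ℝ)) ?_, integral_zero]
    intro y hy
    have hg0 : g (x - (n : ℝ)⁻¹ • y) = 0 := by
      by_contra hne
      apply hx
      have hmem : (n : ℝ)⁻¹ • y ∈ Metric.closedBall (0 : Eucl d) 1 := by
        rw [mem_closedBall_zero_iff, norm_smul, Real.norm_eq_abs,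
          abs_of_nonneg (by positivity : (0:ℝ) ≤ ((n : ℝ))⁻¹)]
        have hy1 : ‖y‖ ≤ 1 := mem_closedBall_zero_iff.mp hy
        have := natinv_le_one n
        nlinarith [norm_nonneg y, inv_nonneg.mpr (Nat.cast_nonneg n : (0:ℝ) ≤ (n:ℝ))]
      have : x = (x - (n : ℝ)⁻¹ • y) + (n : ℝ)⁻¹ • y := by abel
      rw [this]
      exact Set.add_mem_add (subset_tsupport g hne) hmem
    simp [hg0]
  rw [hgnx, hgx, sub_zero]

/-- If `x ↦ ∫ (1 ∧ |y−x|²) k_s(x,y) dy` is locally integrable, then the Dirichlet-form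
energy of `g_n − g` tends to `0` for the mollifications `g_n` of a compactly supported
Lipschitz function `g`. -/
theorem mollification_energy_tendsto_zero {d : ℕ} (χ : Eucl d → ℝ) (hχ : IsMollifier d χ)
    (ks : Eucl d → Eucl d → ℝ) (hks0 : ∀ x y, 0 ≤ ks x y)
    (hksm : Measurable (Function.uncurry ks))
    (hsym : ∀ x y, ks x y = ks y x)
    (hloc : ∀ K : Set (Eucl d), IsCompact K →
      (∫⁻ x in K, ∫⁻ y, ENNReal.ofReal (min 1 (‖y - x‖ ^ 2) * ks x y)) < ∞)
    (g : Eucl d → ℝ) (L : ℝ≥0) (hg : LipschitzWith L g) (hgc : HasCompactSupport g)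
    (gn : ℕ → Eucl d → ℝ)
    (hgn : ∀ n x, gn n x =
      ∫ y in Metric.closedBall (0 : Eucl d) 1, χ y * g (x - (n : ℝ)⁻¹ • y)) :
    Tendsto (fun n => ∫⁻ x, ∫⁻ y,
        ENNReal.ofReal (((gn n y - g y) - (gn n x - g x)) ^ 2 * ks x y))
      atTop (nhds 0) := by
  obtain ⟨hb, hlip⟩ := moll_props χ hχ g L hg gn hgn
  set K : Set (Eucl d) := tsupport g + Metric.closedBall (0 : Eucl d) 1 with hKdef
  have hK : IsCompact K := IsCompact.add hgc (isCompact_closedBall _ _)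
  have hsupp := moll_supp χ hχ g hgc gn hgn
  -- continuity
  have hcont : ∀ n, Continuous fun x => gn n x - g x := by
    intro n
    have : LipschitzWith L (gn n) := by
      apply LipschitzWith.of_dist_le_mul
      intro x x'
      rw [Real.dist_eq, dist_eq_norm]
      exact hlip n x x'
    exact this.continuous.sub hg.continuous
  -- pointwise convergence
  have htend : ∀ x, Tendsto (fun n => gn n x - g x) atTop (𝓝 0) := by
    intro x
    apply squeeze_zero_norm (fun n => hb n x)
    have := tendsto_inv_atTop_nhds_zero_nat.const_mul (L : ℝ)
    simpa using this
  -- key quadratic estimate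
  have hkey : ∀ (n : ℕ) (x y : Eucl d),
      ((gn n y - g y) - (gn n x - g x)) ^ 2 ≤ 4 * (L : ℝ) ^ 2 * min 1 (‖y - x‖ ^ 2) := by
    intro n x y
    set Δ : ℝ := (gn n y - g y) - (gn n x - g x) with hΔ
    have hL0 : (0 : ℝ) ≤ L := L.coe_nonneg
    rcases le_total (1 : ℝ) (‖y - x‖ ^ 2) with hc | hc
    · rw [min_eq_left hc]
      have h1 : |Δ| ≤ 2 * (L : ℝ) := by
        have hn1 : (n : ℝ)⁻¹ ≤ 1 := natinv_le_one n
        have h2 := hb n y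
        have h3 := hb n x
        have h4 : (L : ℝ) * (n : ℝ)⁻¹ ≤ L := by nlinarith
        calc |Δ| ≤ |gn n y - g y| + |gn n x - g x| := abs_sub _ _
          _ ≤ 2 * (L : ℝ) := by nlinarith [(hb n y).trans h4, (hb n x).trans h4]
      obtain ⟨hl, hr⟩ := abs_le.mp h1
      nlinarith
    · rw [min_eq_right hc]
      have h1 : |Δ| ≤ 2 * (L : ℝ) * ‖y - x‖ := by
        have h2 : |gn n y - gn n x| ≤ (L : ℝ) * ‖y - x‖ := hlip n y x
        have h3 : |g y - g x| ≤ (L : ℝ) * ‖y - x‖ := by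
          have := hg.dist_le_mul y x
          rwa [Real.dist_eq, dist_eq_norm] at this
        calc |Δ| = |(gn n y - gn n x) - (g y - g x)| := by rw [hΔ]; ring_nf
          _ ≤ |gn n y - gn n x| + |g y - g x| := abs_sub _ _
          _ ≤ 2 * (L : ℝ) * ‖y - x‖ := by nlinarith
      obtain ⟨hl, hr⟩ := abs_le.mp h1
      nlinarith [norm_nonneg (y - x)]
  exact energy_aux ks hks0 hksm hsym K hK (hloc K hK) (fun n x => gn n x - g x)
    hcont (4 * (L : ℝ) ^ 2) (by positivity) hkey hsupp htend
end
end

section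
/- A sequence f_n ∈ L²_n converges weakly to f ∈ L²(ℝ^d) (in the Kuwae–Shioya sense) if and only if ⟨e_n f_n, g⟩_{L²} → ⟨f, g⟩_{L²} for every g ∈ L²(ℝ^d). -/
/-!
The extension `e_n` is an isometry from `L²_n` into `L²`, adjoint to the restriction in the sense
`∫ (e_n u) g = ⟨u, r_n g⟩_{L²_n}`, with `r_n e_n = id`; and `r_n` is linear and contracting
(Cauchy–Schwarz on each cube). Hence `r_n g → g` strongly, and testing weak convergence against
`g_n = r_n g` gives `∫ (e_n f_n) g → ∫ f g`. Conversely, if these integrals converge for every `g`,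
the functionals `⟪e_n f_n, ·⟫` are pointwise bounded, so by Banach–Steinhaus `‖f_n‖_{L²_n}` is
bounded by some `C`. For `g_n → g` strongly,
`|∫ (e_n f_n) g - ⟨f_n, g_n⟩| = |⟨f_n, r_n g - g_n⟩| ≤ C ‖r_n g - g_n‖_{L²_n} → 0`,
the last limit being strong convergence tested on the constant sequence `g`.
-/

open MeasureTheory Filter Topology
open scoped ENNReal NNReal Pointwise

noncomputable section

/-- The half-open cube of side `1/n` centred at the lattice point `a/n`, `a ∈ ℤ^d`. -/
def cube (d n : ℕ) (a : Fin d → ℤ) : Set (Eucl d) :=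
  {x | ∀ i, (a i : ℝ)/n - 1/(2*n) ≤ x i ∧ x i < (a i : ℝ)/n + 1/(2*n)}

/-- `[x]_n`: the index of the lattice point of `(1/n)ℤ^d` nearest to `x`. -/
def lattOf (d n : ℕ) (x : Eucl d) : Fin d → ℤ := fun i => ⌊n * x i + 1/2⌋

/-- The restriction operator `r_n f (a) = n^d ∫_{ā} f`. -/
def rres (d n : ℕ) (f : Eucl d → ℝ) (a : Fin d → ℤ) : ℝ :=
  (n : ℝ) ^ d * ∫ x in cube d n a, f x

/-- The extension operator `e_n f (x) = f(a)` for `x ∈ ā`. -/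
def eext (d n : ℕ) (f : (Fin d → ℤ) → ℝ) (x : Eucl d) : ℝ := f (lattOf d n x)

/-- The `L²_n` norm on the lattice `(1/n)ℤ^d`, `‖u‖ = (n^{-d} ∑_a u(a)²)^{1/2}`. -/
def latNorm (d n : ℕ) (u : (Fin d → ℤ) → ℝ) : ℝ≥0∞ :=
  ((∑' a : Fin d → ℤ, ENNReal.ofReal ((u a) ^ 2)) / (n : ℝ≥0∞) ^ d) ^ (1/2 : ℝ)

/-- Strong convergence in the Kuwae–Shioya sense of `f_n ∈ L²_n` to `f ∈ L²(ℝ^d)`,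
relative to a dense set `𝒞 ⊆ L²`: for every sequence `g_m ∈ 𝒞` with `g_m → f` in `L²`,
`lim_m limsup_n ‖r_n g_m − f_n‖_{L²_n} = 0`. -/
def StrongConvTo (d : ℕ) (𝒞 : Set (Eucl d → ℝ)) (fn : ℕ → (Fin d → ℤ) → ℝ)
    (f : Eucl d → ℝ) : Prop :=
  ∀ g : ℕ → Eucl d → ℝ, (∀ m, g m ∈ 𝒞) →
    Tendsto (fun m => eLpNorm (g m - f) 2 volume) atTop (nhds 0) →
    Tendsto (fun m =>
        limsup (fun n => latNorm d n (fun a => rres d n (g m) a - fn n a)) atTop)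
      atTop (nhds 0)

/-- The `L²_n` scalar product `⟨u,v⟩ = n^{-d} ∑_a u(a) v(a)`. -/
def latInner (d n : ℕ) (u v : (Fin d → ℤ) → ℝ) : ℝ :=
  ((n : ℝ) ^ d)⁻¹ * ∑' a : Fin d → ℤ, u a * v a

/-- Weak convergence in the Kuwae–Shioya sense of `f_n ∈ L²_n` to `f ∈ L²(ℝ^d)`:
`⟨f_n, g_n⟩_{L²_n} → ⟨f, g⟩_{L²}` for every sequence `g_n ∈ L²_n` converging strongly
to some `g ∈ L²`. -/
def WeakConvTo (d : ℕ) (fn : ℕ → (Fin d → ℤ) → ℝ) (f : Eucl d → ℝ) : Prop :=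
  ∀ (gn : ℕ → (Fin d → ℤ) → ℝ) (g : Eucl d → ℝ), MemLp g 2 volume →
    (∀ n, Summable (fun a => (gn n a) ^ 2)) →
    StrongConvTo d {u | MemLp u 2 volume} gn g →
    Tendsto (fun n => latInner d n (fn n) (gn n)) atTop (nhds (∫ x, f x * g x))

open Set
open scoped InnerProductSpace

section Fibers

variable {X ι : Type*} [MeasurableSpace X] [Countable ι] [MeasurableSpace ι]
  [MeasurableSingletonClass ι] {μ : Measure X} {π : X → ι}

lemma lintegral_eq_tsum_fiber (hπ : Measurable π) (F : X → ℝ≥0∞) :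
    ∫⁻ x, F x ∂μ = ∑' i, ∫⁻ x in π ⁻¹' {i}, F x ∂μ := by
  rw [← lintegral_iUnion (fun i => hπ (measurableSet_singleton i)) (pairwise_disjoint_fiber π),
    ← preimage_iUnion, iUnion_of_singleton, preimage_univ, setLIntegral_univ]

lemma integral_eq_tsum_fiber {E : Type*} [NormedAddCommGroup E] [NormedSpace ℝ E]
    (hπ : Measurable π) {F : X → E} (hF : Integrable F μ) :
    ∫ x, F x ∂μ = ∑' i, ∫ x in π ⁻¹' {i}, F x ∂μ := by
  rw [← integral_iUnion (fun i => hπ (measurableSet_singleton i)) (pairwise_disjoint_fiber π)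
    hF.integrableOn, ← preimage_iUnion, iUnion_of_singleton, preimage_univ, setIntegral_univ]

end Fibers

section RealL2

variable {X : Type*} [MeasurableSpace X] {μ : Measure X}

lemma ofReal_sq_eq_enorm_sq (t : ℝ) : ENNReal.ofReal (t ^ 2) = ‖t‖ₑ ^ 2 := by
  rw [Real.enorm_eq_ofReal_abs, ← ENNReal.ofReal_pow (abs_nonneg t), sq_abs]

lemma eLpNorm_two_eq (g : X → ℝ) :
    eLpNorm g 2 μ = (∫⁻ x, ‖g x‖ₑ ^ 2 ∂μ) ^ (1 / 2 : ℝ) := by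
  simp [eLpNorm_eq_lintegral_rpow_enorm_toReal two_ne_zero ENNReal.ofNat_ne_top]

lemma sq_rpow_one_half (a : ℝ≥0∞) : (a ^ (1 / 2 : ℝ)) ^ 2 = a := by
  rw [← ENNReal.rpow_mul_natCast]
  norm_num

lemma sq_eLpNorm_two (g : X → ℝ) : eLpNorm g 2 μ ^ 2 = ∫⁻ x, ‖g x‖ₑ ^ 2 ∂μ := by
  rw [eLpNorm_two_eq, sq_rpow_one_half]

lemma enorm_integral_sq_le {g : X → ℝ} (hg : AEStronglyMeasurable g μ) :
    ‖∫ x, g x ∂μ‖ₑ ^ 2 ≤ μ univ * ∫⁻ x, ‖g x‖ₑ ^ 2 ∂μ := by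
  have holder := eLpNorm_le_eLpNorm_mul_rpow_measure_univ (p := 1) (q := 2) one_le_two hg
  norm_num [eLpNorm_one_eq_lintegral_enorm, eLpNorm_two_eq] at holder
  calc ‖∫ x, g x ∂μ‖ₑ ^ 2 ≤ (∫⁻ x, ‖g x‖ₑ ∂μ) ^ 2 := by
        gcongr
        exact enorm_integral_le_lintegral_enorm g
    _ ≤ ((∫⁻ x, ‖g x‖ₑ ^ 2 ∂μ) ^ (1 / 2 : ℝ) * μ univ ^ (1 / 2 : ℝ)) ^ 2 :=
        pow_le_pow_left' holder 2
    _ = μ univ * ∫⁻ x, ‖g x‖ₑ ^ 2 ∂μ := by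
        rw [mul_pow, sq_rpow_one_half, sq_rpow_one_half, mul_comm]

lemma MemLp.inner_toLp_eq_integral_mul {f g : X → ℝ} (hf : MemLp f 2 μ) (hg : MemLp g 2 μ) :
    ⟪hf.toLp f, hg.toLp g⟫_ℝ = ∫ x, f x * g x ∂μ := by
  rw [L2.inner_def]
  refine integral_congr_ae ?_
  filter_upwards [hf.coeFn_toLp, hg.coeFn_toLp] with x hfx hgx
  simp [hfx, hgx, mul_comm]

end RealL2

lemma exists_norm_le_of_forall_exists_norm_inner_le {𝕜 E ι : Type*} [RCLike 𝕜]
    [NormedAddCommGroup E] [InnerProductSpace 𝕜 E] [CompleteSpace E] {x : ι → E}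
    (h : ∀ y, ∃ C, ∀ i, ‖⟪x i, y⟫_𝕜‖ ≤ C) : ∃ C, ∀ i, ‖x i‖ ≤ C := by
  simpa [innerSL_apply_norm] using banach_steinhaus (g := fun i => innerSL 𝕜 (x i)) h

lemma summable_sq_sub {α : Type*} {u w : α → ℝ} (hu : Summable fun a => u a ^ 2)
    (hw : Summable fun a => w a ^ 2) : Summable fun a => (u a - w a) ^ 2 :=
  .of_nonneg_of_le (fun a => sq_nonneg _) (fun a => by nlinarith [sq_nonneg (u a + w a)])
    ((hu.add hw).mul_left 2)

lemma summable_mul_of_summable_sq {α : Type*} {u w : α → ℝ} (hu : Summable fun a => u a ^ 2)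
    (hw : Summable fun a => w a ^ 2) : Summable fun a => u a * w a :=
  .of_norm_bounded ((hu.add hw).mul_left (1 / 2)) fun a => by
    rw [Real.norm_eq_abs, abs_mul]
    nlinarith [sq_nonneg (|u a| - |w a|), sq_abs (u a), sq_abs (w a)]

section Lattice

variable {d n : ℕ}

lemma measurable_lattOf : Measurable (lattOf d n) :=
  measurable_pi_lambda _ fun i =>
    (by fun_prop : Measurable fun x : Eucl d => (n : ℝ) * x i + 1 / 2).floor

lemma lattOf_eq_iff_mem_cube (hn : 0 < n) {x : Eucl d} {a : Fin d → ℤ} :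
    lattOf d n x = a ↔ x ∈ cube d n a := by
  have hn' : (0 : ℝ) < n := Nat.cast_pos.mpr hn
  simp only [lattOf, cube, funext_iff, Int.floor_eq_iff]
  refine forall_congr' fun i => ?_
  rw [show (a i : ℝ) / n - 1 / (2 * n) = (a i - 1 / 2) / n by field_simp,
    show (a i : ℝ) / n + 1 / (2 * n) = (a i + 1 / 2) / n by field_simp,
    div_le_iff₀ hn', lt_div_iff₀ hn']
  constructor <;> rintro ⟨h₁, h₂⟩ <;> constructor <;> linarith

lemma cube_eq_preimage_lattOf (hn : 0 < n) (a : Fin d → ℤ) :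
    cube d n a = lattOf d n ⁻¹' {a} := by
  ext x
  exact (lattOf_eq_iff_mem_cube hn).symm

lemma volume_cube (hn : 0 < n) (a : Fin d → ℤ) :
    volume (cube d n a) = ((n : ℝ≥0∞) ^ d)⁻¹ := by
  have hn' : (0 : ℝ) < n := Nat.cast_pos.mpr hn
  have hcube : cube d n a = (MeasurableEquiv.toLp 2 (Fin d → ℝ)).symm ⁻¹'
      (univ.pi fun i => Ico ((a i : ℝ) / n - 1 / (2 * n)) ((a i : ℝ) / n + 1 / (2 * n))) := by
    ext x
    simp [cube]
  have hside : ∀ i, volume (Ico ((a i : ℝ) / n - 1 / (2 * n)) ((a i : ℝ) / n + 1 / (2 * n)))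
      = (n : ℝ≥0∞)⁻¹ := fun i => by
    rw [Real.volume_Ico, show (a i : ℝ) / n + 1 / (2 * n) - ((a i : ℝ) / n - 1 / (2 * n))
      = (n : ℝ)⁻¹ by field_simp; ring, ENNReal.ofReal_inv_of_pos hn', ENNReal.ofReal_natCast]
  rw [hcube, (EuclideanSpace.volume_preserving_symm_measurableEquiv_toLp (Fin d)).measure_preimage
    (MeasurableSet.univ_pi fun i => measurableSet_Ico).nullMeasurableSet, volume_pi_pi,
    Finset.prod_congr rfl fun i _ => hside i, Finset.prod_const, Finset.card_univ,
    Fintype.card_fin, ENNReal.inv_pow]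

lemma measurableSet_cube (hn : 0 < n) (a : Fin d → ℤ) : MeasurableSet (cube d n a) :=
  cube_eq_preimage_lattOf hn a ▸ measurable_lattOf (measurableSet_singleton a)

lemma lintegral_eq_tsum_cube (hn : 0 < n) (F : Eucl d → ℝ≥0∞) :
    ∫⁻ x, F x = ∑' a, ∫⁻ x in cube d n a, F x := by
  simp_rw [cube_eq_preimage_lattOf hn]
  exact lintegral_eq_tsum_fiber measurable_lattOf F

lemma integral_eq_tsum_cube (hn : 0 < n) {F : Eucl d → ℝ} (hF : Integrable F) :
    ∫ x, F x = ∑' a, ∫ x in cube d n a, F x := by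
  simp_rw [cube_eq_preimage_lattOf hn]
  exact integral_eq_tsum_fiber measurable_lattOf hF

lemma lintegral_comp_lattOf (hn : 0 < n) (F : (Fin d → ℤ) → ℝ≥0∞) :
    ∫⁻ x : Eucl d, F (lattOf d n x) = (∑' a, F a) / (n : ℝ≥0∞) ^ d := by
  rw [lintegral_eq_tsum_cube hn, div_eq_mul_inv, ← ENNReal.tsum_mul_right]
  refine tsum_congr fun a => ?_
  rw [setLIntegral_congr_fun (measurableSet_cube hn a) fun x hx => by
    rw [(lattOf_eq_iff_mem_cube hn).mpr hx], setLIntegral_const, volume_cube hn]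

lemma eLpNorm_eext (hn : 0 < n) (u : (Fin d → ℤ) → ℝ) :
    eLpNorm (eext d n u) 2 volume = latNorm d n u := by
  simp only [eLpNorm_two_eq, eext, latNorm, ofReal_sq_eq_enorm_sq]
  rw [lintegral_comp_lattOf hn fun a => ‖u a‖ₑ ^ 2]

lemma memLp_eext (hn : 0 < n) {u : (Fin d → ℤ) → ℝ} (hu : Summable fun a => u a ^ 2) :
    MemLp (eext d n u) 2 volume := by
  refine ⟨((measurable_of_countable u).comp measurable_lattOf).aestronglyMeasurable, ?_⟩
  rw [eLpNorm_eext hn, latNorm, ← ENNReal.ofReal_tsum_of_nonneg (fun a => sq_nonneg _) hu]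
  exact ENNReal.rpow_lt_top_of_nonneg (by norm_num)
    (ENNReal.div_lt_top ENNReal.ofReal_ne_top (by positivity)).ne

lemma integral_eext_mul (hn : 0 < n) {u : (Fin d → ℤ) → ℝ} (hu : Summable fun a => u a ^ 2)
    {g : Eucl d → ℝ} (hg : MemLp g 2 volume) :
    ∫ x, eext d n u x * g x = latInner d n u (rres d n g) := by
  have hint : Integrable fun x => eext d n u x * g x := (memLp_eext hn hu).integrable_mul hg
  rw [integral_eq_tsum_cube hn hint, latInner, ← tsum_mul_left]
  refine tsum_congr fun a => ?_
  rw [setIntegral_congr_fun (measurableSet_cube hn a) fun x hx => by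
    rw [eext, (lattOf_eq_iff_mem_cube hn).mpr hx], integral_const_mul, rres]
  field_simp

lemma rres_eext (hn : 0 < n) (u : (Fin d → ℤ) → ℝ) : rres d n (eext d n u) = u := by
  funext a
  rw [rres, setIntegral_congr_fun (measurableSet_cube hn a) fun x hx => by
    rw [eext, (lattOf_eq_iff_mem_cube hn).mpr hx], setIntegral_const, measureReal_def,
    volume_cube hn, smul_eq_mul]
  have : (n : ℝ) ^ d ≠ 0 := by positivity
  simp [this]

lemma norm_toLp_eext (hn : 0 < n) {u : (Fin d → ℤ) → ℝ} (hu : Summable fun a => u a ^ 2) :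
    ‖(memLp_eext hn hu).toLp‖ = (latNorm d n u).toReal := by
  rw [Lp.norm_toLp, eLpNorm_eext hn]

lemma latInner_eq_inner_toLp (hn : 0 < n) {u w : (Fin d → ℤ) → ℝ}
    (hu : Summable fun a => u a ^ 2) (hw : Summable fun a => w a ^ 2) :
    latInner d n u w = ⟪(memLp_eext hn hu).toLp, (memLp_eext hn hw).toLp⟫_ℝ := by
  rw [MemLp.inner_toLp_eq_integral_mul, integral_eext_mul hn hu (memLp_eext hn hw), rres_eext hn]

lemma abs_latInner_le (hn : 0 < n) {u w : (Fin d → ℤ) → ℝ}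
    (hu : Summable fun a => u a ^ 2) (hw : Summable fun a => w a ^ 2) :
    |latInner d n u w| ≤ (latNorm d n u).toReal * (latNorm d n w).toReal := by
  rw [latInner_eq_inner_toLp hn hu hw, ← norm_toLp_eext hn hu, ← norm_toLp_eext hn hw]
  exact abs_real_inner_le_norm _ _

lemma latInner_sub_right {u v w : (Fin d → ℤ) → ℝ} (hu : Summable fun a => u a ^ 2)
    (hv : Summable fun a => v a ^ 2) (hw : Summable fun a => w a ^ 2) :
    latInner d n u (v - w) = latInner d n u v - latInner d n u w := by
  simp only [latInner, Pi.sub_apply, mul_sub]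
  rw [Summable.tsum_sub (summable_mul_of_summable_sq hu hv) (summable_mul_of_summable_sq hu hw),
    mul_sub]

lemma integrableOn_cube (hn : 0 < n) {g : Eucl d → ℝ} (hg : MemLp g 2 volume) (a : Fin d → ℤ) :
    IntegrableOn g (cube d n a) := by
  have : IsFiniteMeasure (volume.restrict (cube d n a)) :=
    isFiniteMeasure_restrict.mpr (by simp [volume_cube hn, hn.ne'])
  exact (hg.restrict _).integrable one_le_two

lemma rres_sub (hn : 0 < n) {g₁ g₂ : Eucl d → ℝ} (h₁ : MemLp g₁ 2 volume)
    (h₂ : MemLp g₂ 2 volume) : rres d n (g₁ - g₂) = rres d n g₁ - rres d n g₂ := by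
  funext a
  simp only [rres, Pi.sub_apply, ← mul_sub]
  rw [integral_sub (integrableOn_cube hn h₁ a) (integrableOn_cube hn h₂ a)]

lemma ofReal_sq_rres_le (hn : 0 < n) {g : Eucl d → ℝ} (hg : MemLp g 2 volume) (a : Fin d → ℤ) :
    ENNReal.ofReal (rres d n g a ^ 2) ≤ (n : ℝ≥0∞) ^ d * ∫⁻ x in cube d n a, ‖g x‖ₑ ^ 2 := by
  have hN : (n : ℝ≥0∞) ^ d ≠ 0 := by positivity
  have hN' : (n : ℝ≥0∞) ^ d ≠ ⊤ := by finiteness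
  have hcs := enorm_integral_sq_le (hg.1.restrict (s := cube d n a))
  rw [Measure.restrict_apply_univ, volume_cube hn] at hcs
  calc ENNReal.ofReal (rres d n g a ^ 2)
      = ((n : ℝ≥0∞) ^ d) ^ 2 * ‖∫ x in cube d n a, g x‖ₑ ^ 2 := by
        rw [ofReal_sq_eq_enorm_sq, rres, enorm_mul, mul_pow]
        simp
    _ ≤ ((n : ℝ≥0∞) ^ d) ^ 2 * (((n : ℝ≥0∞) ^ d)⁻¹ * ∫⁻ x in cube d n a, ‖g x‖ₑ ^ 2) := by
        gcongr
    _ = (n : ℝ≥0∞) ^ d * ∫⁻ x in cube d n a, ‖g x‖ₑ ^ 2 := by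
        rw [sq, ← mul_assoc, mul_assoc _ _ (_⁻¹), ENNReal.mul_inv_cancel hN hN', mul_one]

lemma tsum_ofReal_sq_rres_le (hn : 0 < n) {g : Eucl d → ℝ} (hg : MemLp g 2 volume) :
    ∑' a, ENNReal.ofReal (rres d n g a ^ 2) ≤ (n : ℝ≥0∞) ^ d * ∫⁻ x, ‖g x‖ₑ ^ 2 := by
  rw [lintegral_eq_tsum_cube hn, ← ENNReal.tsum_mul_left]
  exact ENNReal.tsum_le_tsum (ofReal_sq_rres_le hn hg)

lemma latNorm_rres_le (hn : 0 < n) {g : Eucl d → ℝ} (hg : MemLp g 2 volume) :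
    latNorm d n (rres d n g) ≤ eLpNorm g 2 volume := by
  rw [latNorm, eLpNorm_two_eq]
  gcongr
  rw [ENNReal.div_le_iff (by positivity) (by finiteness), mul_comm]
  exact tsum_ofReal_sq_rres_le hn hg

lemma summable_sq_rres (n : ℕ) {g : Eucl d → ℝ} (hg : MemLp g 2 volume) :
    Summable fun a => rres d n g a ^ 2 := by
  rcases n.eq_zero_or_pos with rfl | hn
  -- at the degenerate scale `n = 0`, `r_0 g = 0 ^ d * _` vanishes unless `d = 0`, when
  -- there is a single lattice point
  · rcases d.eq_zero_or_pos with rfl | hd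
    · exact .of_finite
    · simp [rres, hd.ne']
  · have hfin : ∑' a, ENNReal.ofReal (rres d n g a ^ 2) ≠ ⊤ :=
      ne_top_of_le_ne_top (ENNReal.mul_ne_top (by finiteness)
        (sq_eLpNorm_two g ▸ ENNReal.pow_ne_top hg.eLpNorm_ne_top)) (tsum_ofReal_sq_rres_le hn hg)
    simpa [ENNReal.toReal_ofReal, sq_nonneg] using ENNReal.summable_toReal hfin

lemma strongConvTo_rres {g : Eucl d → ℝ} (hg : MemLp g 2 volume) :
    StrongConvTo d {u | MemLp u 2 volume} (fun n => rres d n g) g := by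
  intro gm hgm hlim
  refine tendsto_of_tendsto_of_tendsto_of_le_of_le tendsto_const_nhds hlim (fun _ => zero_le)
    fun m => limsup_le_of_le (by isBoundedDefault) ?_
  filter_upwards [eventually_gt_atTop 0] with n hn
  change latNorm d n (rres d n (gm m) - rres d n g) ≤ _
  rw [← rres_sub hn (hgm m) hg]
  exact latNorm_rres_le hn ((hgm m).sub hg)

lemma tendsto_latNorm_rres_sub {gn : ℕ → (Fin d → ℤ) → ℝ} {g : Eucl d → ℝ}
    (hg : MemLp g 2 volume) (h : StrongConvTo d {u | MemLp u 2 volume} gn g) :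
    Tendsto (fun n => latNorm d n (rres d n g - gn n)) atTop (𝓝 0) := by
  have hlimsup := tendsto_const_nhds_iff.mp (h (fun _ => g) (fun _ => hg) (by simp))
  exact tendsto_of_le_liminf_of_limsup_le zero_le hlimsup.le

lemma exists_latNorm_le_of_tendsto_integral_eext_mul {fn : ℕ → (Fin d → ℤ) → ℝ}
    (hfn : ∀ n, Summable fun a => fn n a ^ 2)
    (h : ∀ g, MemLp g 2 volume →
      ∃ l, Tendsto (fun n => ∫ x, eext d n (fn n) x * g x) atTop (𝓝 l)) :
    ∃ C, ∀ n, 0 < n → (latNorm d n (fn n)).toReal ≤ C := by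
  obtain ⟨C, hC⟩ := exists_norm_le_of_forall_exists_norm_inner_le (𝕜 := ℝ)
    (x := fun n : {n : ℕ // 0 < n} => (memLp_eext n.2 (hfn n)).toLp) fun y => by
      obtain ⟨l, hl⟩ := h y (Lp.memLp y)
      obtain ⟨C, hC⟩ := hl.norm.bddAbove_range
      refine ⟨C, fun n => ?_⟩
      rw [← Lp.toLp_coeFn y (Lp.memLp y), MemLp.inner_toLp_eq_integral_mul]
      exact hC ⟨n, rfl⟩
  exact ⟨C, fun n hn => norm_toLp_eext hn (hfn n) ▸ hC ⟨n, hn⟩⟩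

end Lattice

theorem weak_convergence_iff_general (d : ℕ)
    (fn : ℕ → (Fin d → ℤ) → ℝ) (hfn : ∀ n, Summable (fun a => (fn n a) ^ 2))
    (f : Eucl d → ℝ) :
    WeakConvTo d fn f ↔
      ∀ g : Eucl d → ℝ, MemLp g 2 volume →
        Tendsto (fun n => ∫ x, eext d n (fn n) x * g x) atTop
          (nhds (∫ x, f x * g x)) := by
  constructor
  · intro hweak g hg
    refine (hweak _ g hg (summable_sq_rres · hg) (strongConvTo_rres hg)).congr' ?_
    filter_upwards [eventually_gt_atTop 0] with n hn
    exact (integral_eext_mul hn (hfn n) hg).symm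
  · intro h gn g hg hgn hstrong
    obtain ⟨C, hC⟩ := exists_latNorm_le_of_tendsto_integral_eext_mul hfn fun g hg => ⟨_, h g hg⟩
    have hgap : Tendsto (fun n => (latNorm d n (rres d n g - gn n)).toReal) atTop (𝓝 0) :=
      (ENNReal.tendsto_toReal ENNReal.zero_ne_top).comp (tendsto_latNorm_rres_sub hg hstrong)
    have hdist : Tendsto (fun n => (∫ x, eext d n (fn n) x * g x) - latInner d n (fn n) (gn n))
        atTop (𝓝 0) := by
      refine squeeze_zero_norm' ?_ (by simpa using hgap.const_mul C)
      filter_upwards [eventually_gt_atTop 0] with n hn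
      rw [integral_eext_mul hn (hfn n) hg,
        ← latInner_sub_right (hfn n) (summable_sq_rres n hg) (hgn n), Real.norm_eq_abs]
      calc _ ≤ (latNorm d n (fn n)).toReal * (latNorm d n (rres d n g - gn n)).toReal :=
            abs_latInner_le hn (hfn n) (summable_sq_sub (summable_sq_rres n hg) (hgn n))
        _ ≤ C * (latNorm d n (rres d n g - gn n)).toReal := by gcongr; exact hC n hn
    simpa only [sub_zero, sub_sub_cancel] using (h g hg).sub hdist

/-- Kuwae–Shioya weak convergence of `f_n ∈ L²_n` to `f ∈ L²(ℝ^d)` holds if and only if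
`⟨e_n f_n, g⟩_{L²} → ⟨f, g⟩_{L²}` for every `g ∈ L²(ℝ^d)`. -/
theorem weak_convergence_iff (d : ℕ)
    (fn : ℕ → (Fin d → ℤ) → ℝ) (hfn : ∀ n, Summable (fun a => (fn n a) ^ 2))
    (f : Eucl d → ℝ) (hf : MemLp f 2 volume) :
    WeakConvTo d fn f ↔
      ∀ g : Eucl d → ℝ, MemLp g 2 volume →
        Tendsto (fun n => ∫ x, eext d n (fn n) x * g x) atTop
          (nhds (∫ x, f x * g x)) :=
  weak_convergence_iff_general d fn hfn f
end
end
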